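/- arXiv:2506.00695 — 2 statements merged into one kernel-verified Lean document; each statement's English description precedes it below -/
import Mathlib

section
/- Let Π_T = Π(v_T) where v_T = (x̂ + v_S)/|x̂ + v_S| with v_S = (x̂+ŷ)/√2. Then R_ẑ(π/4) = Π_T · X, i.e., the T gate equals e^{iπ/8}·Π_T·X up to global phase. -/
open Complex Matrix Kronecker

noncomputable section

/-- Pauli X -/
def PX : Matrix (Fin 2) (Fin 2) ℂ := !![0, 1; 1, 0]
/-- Pauli Y -/
def PY : Matrix (Fin 2) (Fin 2) ℂ := !![0, -I; I, 0]
/-- Pauli Z -/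
def PZ : Matrix (Fin 2) (Fin 2) ℂ := !![1, 0; 0, -1]

/-- the dot product `v · σ` of a real 3-vector with the Pauli vector -/
def pdot (v : Fin 3 → ℝ) : Matrix (Fin 2) (Fin 2) ℂ :=
  (v 0 : ℂ) • PX + (v 1 : ℂ) • PY + (v 2 : ℂ) • PZ

/-- the rotation `R_v(λ) = exp(-i λ (v·σ)/2)` -/
def rot (v : Fin 3 → ℝ) (l : ℝ) : Matrix (Fin 2) (Fin 2) ℂ :=
  NormedSpace.exp ((-(l / 2 : ℝ) * I : ℂ) • pdot v)

/-- the Hermitian π-rotation `Π(v) = i • R_v(π)` -/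
def Pir (v : Fin 3 → ℝ) : Matrix (Fin 2) (Fin 2) ℂ := I • rot v Real.pi

/-- `v` is a unit vector in `ℝ³` -/
def unit3 (v : Fin 3 → ℝ) : Prop := v ⬝ᵥ v = 1

/-- Euclidean norm on `ℝ³` -/
def norm3 (v : Fin 3 → ℝ) : ℝ := Real.sqrt (v ⬝ᵥ v)

/-- the 3×3 rotation by angle `a` about axis `v` (Rodrigues' formula), applied to `w` -/
def rot3 (v : Fin 3 → ℝ) (a : ℝ) (w : Fin 3 → ℝ) : Fin 3 → ℝ :=
  Real.cos a • w + Real.sin a • (crossProduct v w) + ((1 - Real.cos a) * (v ⬝ᵥ w)) • v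

/-- the Hadamard matrix -/
def Hmat : Matrix (Fin 2) (Fin 2) ℂ := (Real.sqrt 2 : ℂ)⁻¹ • !![1, 1; 1, -1]

/-- the axis of Π_S -/
def vS : Fin 3 → ℝ := (Real.sqrt 2)⁻¹ • ![1, 1, 0]

/-- the axis of Π_T -/
def vT : Fin 3 → ℝ := (norm3 (![1, 0, 0] + vS))⁻¹ • (![1, 0, 0] + vS)

/-! For a unit vector `v` the matrix `v·σ` squares to `1`, so
`exp (t • v·σ) = cosh t + sinh t • v·σ`; hence `R_v(λ) = cos (λ/2) - i sin (λ/2) v·σ` and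
`Π(v) = v·σ`. The axis `v_T` bisects `x̂` and `v_S = (cos π/4, sin π/4, 0)`, so
`v_T = (cos π/8, sin π/8, 0)`, and `(cos φ X + sin φ Y) X = cos φ - i sin φ Z = R_ẑ(2φ)`. -/

theorem pow_eq_of_mul_self_eq_one {𝕜 R : Type*} [Field 𝕜] [CharZero 𝕜] [Ring R] [Module 𝕜 R]
    [IsScalarTower 𝕜 R R] {a : R} (ha : a * a = 1) (n : ℕ) :
    a ^ n = (2 : 𝕜)⁻¹ • (1 + a) + ((-1 : 𝕜) ^ n / 2) • (1 - a) := by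
  induction n with
  | zero => rw [pow_zero]; module
  | succ n ih =>
    rw [pow_succ, ih]
    simp only [add_mul, sub_mul, smul_mul_assoc, one_mul, ha]
    module

theorem NormedSpace.exp_smul_of_mul_self_eq_one {𝔸 : Type*} [NormedRing 𝔸] [NormedAlgebra ℂ 𝔸]
    [CompleteSpace 𝔸] {a : 𝔸} (ha : a * a = 1) (t : ℂ) :
    NormedSpace.exp (t • a) = cosh t • (1 : 𝔸) + sinh t • a := by
  have hterm : ∀ n : ℕ, (n.factorial⁻¹ : ℂ) • (t • a) ^ n
      = ((n.factorial⁻¹ : ℂ) • t ^ n) • ((2 : ℂ)⁻¹ • (1 + a))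
        + ((n.factorial⁻¹ : ℂ) • (-t) ^ n) • ((2 : ℂ)⁻¹ • (1 - a)) := by
    intro n
    rw [smul_pow, pow_eq_of_mul_self_eq_one (𝕜 := ℂ) ha, neg_pow t]
    module
  have hsum :=
    ((NormedSpace.exp_series_hasSum_exp' (𝕂 := ℂ) t).smul_const ((2 : ℂ)⁻¹ • (1 + a))).add
      ((NormedSpace.exp_series_hasSum_exp' (𝕂 := ℂ) (-t)).smul_const ((2 : ℂ)⁻¹ • (1 - a)))
  rw [← funext hterm] at hsum
  rw [(NormedSpace.exp_series_hasSum_exp' (𝕂 := ℂ) (t • a)).unique hsum, ← Complex.exp_eq_exp_ℂ,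
    ← cosh_add_sinh, ← cosh_sub_sinh]
  module

theorem pdot_mul_self {v : Fin 3 → ℝ} (hv : unit3 v) : pdot v * pdot v = 1 := by
  have h : ((v 0 : ℂ)) ^ 2 + (v 1 : ℂ) ^ 2 + (v 2 : ℂ) ^ 2 = 1 := by
    simp only [unit3, dotProduct, Fin.sum_univ_three] at hv
    exact_mod_cast (by linear_combination hv : v 0 ^ 2 + v 1 ^ 2 + v 2 ^ 2 = 1)
  ext i j
  fin_cases i <;> fin_cases j <;>
    simp [pdot, PX, PY, PZ, Matrix.mul_apply, Fin.sum_univ_two] <;>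
    first | ring1 | linear_combination h - (v 1 : ℂ) ^ 2 * I_sq

theorem rot_eq_cos_sub_sin_smul_pdot {v : Fin 3 → ℝ} (hv : unit3 v) (l : ℝ) :
    rot v l = (Real.cos (l / 2) : ℂ) • 1 - (Real.sin (l / 2) * I) • pdot v := by
  -- `exp` on matrices does not depend on the norm; the operator norm makes them a Banach algebra
  open scoped Norms.Operator in
  refine (NormedSpace.exp_smul_of_mul_self_eq_one (pdot_mul_self hv) _).trans ?_
  rw [neg_mul, cosh_neg, sinh_neg, cosh_mul_I, sinh_mul_I, neg_smul, ← sub_eq_add_neg, ofReal_cos,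
    ofReal_sin]

theorem Pir_eq_pdot {v : Fin 3 → ℝ} (hv : unit3 v) : Pir v = pdot v := by
  rw [Pir, rot_eq_cos_sub_sin_smul_pdot hv, Real.cos_pi_div_two, Real.sin_pi_div_two]
  simp [smul_smul]

theorem pdot_mul_PX (v : Fin 3 → ℝ) :
    pdot v * PX = (v 0 : ℂ) • 1 - (v 1 * I) • PZ + (v 2 * I) • PY := by
  ext i j
  fin_cases i <;> fin_cases j <;>
    simp [pdot, PX, PY, PZ, Matrix.mul_apply, Fin.sum_univ_two] <;> ring_nf <;> simp

theorem unit3_cos_sin (θ : ℝ) : unit3 ![Real.cos θ, Real.sin θ, 0] := by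
  simp [unit3, dotProduct, Fin.sum_univ_three, ← sq]

theorem norm3_smul_of_unit3 {r : ℝ} (hr : 0 ≤ r) {v : Fin 3 → ℝ} (hv : unit3 v) :
    norm3 (r • v) = r := by
  rw [norm3, smul_dotProduct, dotProduct_smul, hv, smul_eq_mul, smul_eq_mul, mul_one,
    Real.sqrt_mul_self hr]

theorem cos_sin_add_cos_sin (α β : ℝ) :
    ![Real.cos α, Real.sin α, 0] + ![Real.cos β, Real.sin β, 0]
      = (2 * Real.cos ((α - β) / 2)) • ![Real.cos ((α + β) / 2), Real.sin ((α + β) / 2), 0] := by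
  ext i
  fin_cases i <;> simp [Real.cos_add_cos, Real.sin_add_sin] <;> ring

theorem vS_eq : vS = ![Real.cos (Real.pi / 4), Real.sin (Real.pi / 4), 0] := by
  rw [vS, Real.cos_pi_div_four, Real.sin_pi_div_four]
  ext i
  fin_cases i <;> simp [Real.sqrt_div_self']

theorem vT_eq : vT = ![Real.cos (Real.pi / 8), Real.sin (Real.pi / 8), 0] := by
  have hcos : 0 < 2 * Real.cos (Real.pi / 8) := by
    have := Real.cos_pos_of_mem_Ioo (x := Real.pi / 8)
      ⟨by linarith [Real.pi_pos], by linarith [Real.pi_pos]⟩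
    positivity
  have hsum : ![1, 0, 0] + vS
      = (2 * Real.cos (Real.pi / 8)) • ![Real.cos (Real.pi / 8), Real.sin (Real.pi / 8), 0] := by
    rw [vS_eq, show ![(1 : ℝ), 0, 0] = ![Real.cos 0, Real.sin 0, 0] by simp, cos_sin_add_cos_sin,
      show (0 - Real.pi / 4) / 2 = -(Real.pi / 8) by ring,
      show (0 + Real.pi / 4) / 2 = Real.pi / 8 by ring, Real.cos_neg]
  rw [vT, hsum, norm3_smul_of_unit3 hcos.le (unit3_cos_sin _), inv_smul_smul₀ hcos.ne']

theorem rz_quarter_via_piT : rot ![0, 0, 1] (Real.pi / 4) = Pir vT * PX := by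
  rw [Pir_eq_pdot (vT_eq ▸ unit3_cos_sin _), vT_eq, pdot_mul_PX,
    rot_eq_cos_sub_sin_smul_pdot (by simp [unit3, dotProduct, Fin.sum_univ_three]),
    show pdot ![0, 0, 1] = PZ by simp [pdot], show Real.pi / 4 / 2 = Real.pi / 8 by ring]
  simp
end
end

section
/- The relative-phase Toffoli identity: the 8×8 operator (I⊗H⊗I applied to middle qubit) · T†_mid · CNOT(1→2) · T_mid · CNOT(3→2) · T†_mid · CNOT(1→2) · T_mid · (H on middle qubit) equals a Toffoli gate with target on the middle qubit and controls on the outer qubits, up to a diagonal relative-phase matrix Δ (i.e., there exists a diagonal unitary Δ such that the product equals Δ·Toffoli). -/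
open Complex Matrix Kronecker

noncomputable section

def permM (g : (Fin 2 × Fin 2 × Fin 2) → (Fin 2 × Fin 2 × Fin 2)) :
    Matrix (Fin 2 × Fin 2 × Fin 2) (Fin 2 × Fin 2 × Fin 2) ℂ :=
  Matrix.of fun p q => if p = g q then 1 else 0

/-- the T gate -/
def Tg : Matrix (Fin 2) (Fin 2) ℂ := !![1, 0; 0, Complex.exp (I * (Real.pi / 4))]

/-- a single-qubit gate applied to the middle qubit of three -/
def onMid (U : Matrix (Fin 2) (Fin 2) ℂ) :
    Matrix (Fin 2 × Fin 2 × Fin 2) (Fin 2 × Fin 2 × Fin 2) ℂ :=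
  (1 : Matrix (Fin 2) (Fin 2) ℂ) ⊗ₖ (U ⊗ₖ (1 : Matrix (Fin 2) (Fin 2) ℂ))

/-- CNOT with control q₁ and target q₂ -/
def cn12 := permM fun s => (s.1, s.2.1 + s.1, s.2.2)
/-- CNOT with control q₃ and target q₂ -/
def cn32 := permM fun s => (s.1, s.2.1 + s.2.2, s.2.2)
/-- Toffoli with controls q₁, q₃ and target q₂ -/
def toffMid := permM fun s => (s.1, s.2.1 + s.1 * s.2.2, s.2.2)

/-!
Every gate of the circuit acts on the middle qubit as a 2×2 block depending only on the classical
values `(a, c)` of the outer qubits: the single-qubit gates as constant blocks, the two CNOTs as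
`X ^ a` and `X ^ c`, the Toffoli as `X ^ (a c)`. Such block-diagonal matrices multiply blockwise,
so the identity reduces to four 2×2 identities `H T† X^a T X^c T† X^a T H = D_{a,c} X^(a c)`
with `D_{a,c}` diagonal; these hold because `ω = e^{iπ/4}` satisfies `ω² = i` and
`T† = diag(1, -i ω)`.
-/

def Equiv.prodLeftComm (α β γ : Type*) : α × β × γ ≃ β × α × γ where
  toFun s := (s.2.1, s.1, s.2.2)
  invFun t := (t.2.1, t.1, t.2.2)
  left_inv _ := rfl
  right_inv _ := rfl

namespace Matrix

section BlockDiagonalMid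

variable {α β γ R : Type*} [Fintype α] [Fintype β] [Fintype γ]
  [DecidableEq α] [DecidableEq β] [DecidableEq γ] [NonAssocSemiring R]

def blockDiagonalMid : ((α × γ) → Matrix β β R) →+* Matrix (α × β × γ) (α × β × γ) R :=
  (reindexRingEquiv R (Equiv.prodLeftComm α β γ).symm).toRingHom.comp
    (blockDiagonalRingHom β (α × γ) R)

theorem blockDiagonalMid_apply (f : (α × γ) → Matrix β β R) (s t : α × β × γ) :
    blockDiagonalMid f s t =
      if (s.1, s.2.2) = (t.1, t.2.2) then f (s.1, s.2.2) s.2.1 t.2.1 else 0 := by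
  simp [blockDiagonalMid, Equiv.prodLeftComm, blockDiagonal_apply]

theorem blockDiagonalMid_diagonal (d : (α × γ) → β → R) :
    blockDiagonalMid (fun k => diagonal (d k)) = diagonal fun s => d (s.1, s.2.2) s.2.1 := by
  simp only [blockDiagonalMid, RingHom.comp_apply, blockDiagonalRingHom_apply,
    blockDiagonal_diagonal]
  exact submatrix_diagonal_equiv (fun ik : β × α × γ => d ik.2 ik.1) (Equiv.prodLeftComm α β γ)

end BlockDiagonalMid

theorem diagonal_mem_unitaryGroup {n R : Type*} [Fintype n] [DecidableEq n] [CommRing R]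
    [StarRing R] {d : n → R} (hd : ∀ i, d i * star (d i) = 1) :
    diagonal d ∈ unitaryGroup n R := by
  rw [mem_unitaryGroup_iff, star_eq_conjTranspose, diagonal_conjTranspose, diagonal_mul_diagonal]
  exact (congrArg diagonal (funext hd)).trans diagonal_one

end Matrix

open ComplexConjugate

def pauliXPow (k : Fin 2) : Matrix (Fin 2) (Fin 2) ℂ := of fun i j => if i = j + k then 1 else 0

theorem pauliXPow_zero : pauliXPow 0 = !![1, 0; 0, 1] := by
  ext i j
  fin_cases i <;> fin_cases j <;> rfl

theorem pauliXPow_one : pauliXPow 1 = !![0, 1; 1, 0] := by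
  ext i j
  fin_cases i <;> fin_cases j <;> rfl

theorem onMid_eq_blockDiagonalMid (U : Matrix (Fin 2) (Fin 2) ℂ) :
    onMid U = blockDiagonalMid fun _ => U := by
  ext ⟨a, b, c⟩ ⟨a', b', c'⟩
  simp only [onMid, kroneckerMap_apply, one_apply, blockDiagonalMid_apply, Prod.mk.injEq]
  split_ifs <;> simp_all

theorem permM_add_eq_blockDiagonalMid (h : Fin 2 → Fin 2 → Fin 2) :
    permM (fun s => (s.1, s.2.1 + h s.1 s.2.2, s.2.2)) =
      blockDiagonalMid fun k => pauliXPow (h k.1 k.2) := by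
  ext ⟨a, b, c⟩ ⟨a', b', c'⟩
  simp only [permM, pauliXPow, of_apply, blockDiagonalMid_apply, Prod.mk.injEq]
  split_ifs <;> simp_all

theorem Hmat_eq : Hmat = !![(√2 : ℂ)⁻¹, (√2 : ℂ)⁻¹; (√2 : ℂ)⁻¹, -(√2 : ℂ)⁻¹] := by
  ext i j
  fin_cases i <;> fin_cases j <;> simp [Hmat]

theorem exp_I_pi_div_four_sq : exp (I * (Real.pi / 4)) ^ 2 = I := by
  rw [← exp_nat_mul, show ((2 : ℕ) : ℂ) * (I * (Real.pi / 4)) = Real.pi / 2 * I by push_cast; ring]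
  exact exp_pi_div_two_mul_I

theorem conj_exp_I_pi_div_four :
    conj (exp (I * (Real.pi / 4))) = -I * exp (I * (Real.pi / 4)) := by
  rw [← exp_neg_pi_div_two_mul_I, ← exp_add, ← exp_conj]
  simp only [map_mul, conj_I, map_div₀, conj_ofReal, map_ofNat]
  ring_nf

theorem Tg_conjTranspose : Tgᴴ = !![1, 0; 0, -I * exp (I * (Real.pi / 4))] := by
  ext i j
  fin_cases i <;> fin_cases j <;> simp [Tg, conj_exp_I_pi_div_four]

/-- The relative phase `CZ₂₃ · CS†₁₃`, as the diagonal of the block of `(a, c)`. -/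
def blockPhase (k : Fin 2 × Fin 2) (b : Fin 2) : ℂ :=
  (-1) ^ (b.val * k.2.val) * (-I) ^ (k.1.val * k.2.val)

theorem blockPhase_mul_star (k : Fin 2 × Fin 2) (b : Fin 2) :
    blockPhase k b * star (blockPhase k b) = 1 := by
  rw [blockPhase, star_mul', star_pow, star_pow, mul_mul_mul_comm, ← mul_pow, ← mul_pow]
  simp

theorem circuit_block_eq (a c : Fin 2) :
    Hmat * Tgᴴ * pauliXPow a * Tg * pauliXPow c * Tgᴴ * pauliXPow a * Tg * Hmat =
      diagonal (blockPhase (a, c)) * pauliXPow (a * c) := by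
  have hω := exp_I_pi_div_four_sq
  have hs : (√2 : ℂ)⁻¹ ^ 2 = 1 / 2 := by
    rw [inv_pow, ← ofReal_pow, Real.sq_sqrt zero_le_two]
    norm_num
  rw [Hmat_eq, Tg_conjTranspose, Tg]
  generalize exp (I * (Real.pi / 4)) = ω at *
  generalize (√2 : ℂ)⁻¹ = s at *
  fin_cases a <;> fin_cases c <;>
    simp only [Fin.zero_eta, Fin.mk_one, mul_zero, mul_one, pauliXPow_zero, pauliXPow_one,
      diagonal_fin_two, blockPhase, Fin.val_zero, Fin.val_one, pow_zero, pow_one, mul_fin_two,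
      EmbeddingLike.apply_eq_iff_eq, vecCons_inj, and_true] <;>
    grind [I_sq]

theorem relative_phase_toffoli :
    ∃ Δ : Matrix (Fin 2 × Fin 2 × Fin 2) (Fin 2 × Fin 2 × Fin 2) ℂ,
      Δ.IsDiag ∧ Δ ∈ Matrix.unitaryGroup (Fin 2 × Fin 2 × Fin 2) ℂ ∧
      onMid Hmat * onMid Tgᴴ * cn12 * onMid Tg * cn32 * onMid Tgᴴ * cn12 *
          onMid Tg * onMid Hmat = Δ * toffMid := by
  refine ⟨diagonal fun s => blockPhase (s.1, s.2.2) s.2.1, isDiag_diagonal _,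
    diagonal_mem_unitaryGroup fun s => blockPhase_mul_star _ _, ?_⟩
  rw [← blockDiagonalMid_diagonal, cn12, cn32, toffMid,
    permM_add_eq_blockDiagonalMid fun a _ => a, permM_add_eq_blockDiagonalMid fun _ c => c,
    permM_add_eq_blockDiagonalMid fun a c => a * c]
  simp only [onMid_eq_blockDiagonalMid, ← map_mul]
  exact congrArg blockDiagonalMid (funext fun k => circuit_block_eq k.1 k.2)
end
end
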